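/- A symmetric solution C of the matrix equation for the regular part of the Green's function is bisymmetric and determined by its first column: suppose C ∈ M_m(ℝ) is symmetric and satisfies (P − Λ) C = (1/(1 − p^{−1})) (P Λ^{−1} − (1/m) 𝟙𝟙ᵀ). Then C is bisymmetric (symmetric and centrosymmetric, i.e. JCJ = C for the exchange matrix J), and for all i, j ∈ {1, …, m}: if i ≥ j then C_{ij} = C_{i1} + C_{mj} − C_{m1}, and if i ≤ j then C_{ij} = C_{im} + C_{1j} − C_{1m}. -/

import Mathlib

/-- The matrix `P i j = (1 − p⁻¹) p^{−|i−j|}`. -/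
noncomputable def Pmat (p m : ℕ) : Matrix (Fin m) (Fin m) ℝ :=
  Matrix.of fun i j => (1 - (p : ℝ)⁻¹) * (p : ℝ) ^ (-|(i : ℤ) - (j : ℤ)|)

/-- The diagonal entries `Λ_i = Σ_j P i j`. -/
noncomputable def LamDiag (p m : ℕ) (i : Fin m) : ℝ := ∑ j, Pmat p m i j

/-- The `m × m` exchange matrix `J`, with `J i j = 1` iff `i + j = m - 1`
(0-based indexing, corresponding to `i + j = m + 1` in 1-based indexing). -/
def exchMatrix (m : ℕ) : Matrix (Fin m) (Fin m) ℝ :=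
  Matrix.of fun i j => if (i : ℕ) + (j : ℕ) = m - 1 then 1 else 0

/-!
With `x = p⁻¹`, `P` is `(1 - x)` times the Kac–Murdock–Szegő matrix `(x ^ |i - j|)`, whose inverse
is tridiagonal: the combinations `-x Pᵢ₋₁ + (1 + x²) Pᵢ - x Pᵢ₊₁` of consecutive rows, and
`Pₘ - x Pₘ₋₁` at the last row, are multiples of unit vectors.

Since `P` and `Λ` are centrosymmetric, `J C J` solves the same equation as `C`, so every column of
`C - J C J` lies in the kernel of the weighted graph Laplacian `P - Λ` and is constant. A symmetric
matrix with constant columns is constant, and `C - J C J` is also anti-centrosymmetric; hence it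
vanishes.

For the column formula, the difference `w` of columns `j` and `1` of `C` satisfies
`P (w - r) = Λ w`, where `r` comes from `P Λ⁻¹` and is supported on the rows `j` and `1`. Applying
the tridiagonal inverse on the rows below `j` turns this into a three-term recurrence for `w`, which
the constant vectors satisfy too, with the last row as boundary condition; back substitution from
row `m` shows that `w` is constant on the rows `i ≥ j`.
-/
open Matrix

section PowNatAbs

variable {R : Type*} [CommRing R] (x : R)

theorem pow_natAbs_second_difference (n : ℤ) :
    -x * x ^ (n - 1).natAbs + (1 + x ^ 2) * x ^ n.natAbs - x * x ^ (n + 1).natAbs =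
      if n = 0 then 1 - x ^ 2 else 0 := by
  rcases lt_trichotomy n 0 with hn | rfl | hn
  · obtain ⟨k, hk⟩ : ∃ k, n.natAbs = k + 1 := ⟨n.natAbs - 1, by omega⟩
    rw [show (n - 1).natAbs = k + 2 by omega, show (n + 1).natAbs = k by omega, hk,
      if_neg hn.ne]
    ring
  · rw [if_pos rfl, show ((0 : ℤ) - 1).natAbs = 1 from rfl, show ((0 : ℤ) + 1).natAbs = 1 from rfl,
      Int.natAbs_zero]
    ring
  · obtain ⟨k, hk⟩ : ∃ k, n.natAbs = k + 1 := ⟨n.natAbs - 1, by omega⟩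
    rw [show (n - 1).natAbs = k by omega, show (n + 1).natAbs = k + 2 by omega, hk,
      if_neg hn.ne']
    ring

theorem pow_natAbs_first_difference {n : ℤ} (hn : 0 ≤ n) :
    x ^ n.natAbs - x * x ^ (n - 1).natAbs = if n = 0 then 1 - x ^ 2 else 0 := by
  rcases hn.eq_or_lt with rfl | hn
  · rw [if_pos rfl, show ((0 : ℤ) - 1).natAbs = 1 from rfl, Int.natAbs_zero]
    ring
  · obtain ⟨k, hk⟩ : ∃ k, n.natAbs = k + 1 := ⟨n.natAbs - 1, by omega⟩
    rw [show (n - 1).natAbs = k by omega, hk, if_neg hn.ne']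
    ring

end PowNatAbs

theorem eq_of_mulVec_eq_rowSum_mul {ι : Type*} [Fintype ι] {A : Matrix ι ι ℝ}
    (hA : ∀ i j, 0 < A i j) {v : ι → ℝ} (hv : ∀ i, (A *ᵥ v) i = (∑ j, A i j) * v i)
    (i j : ι) : v i = v j := by
  obtain ⟨i₀, -, hmax⟩ := Finset.exists_max_image Finset.univ v ⟨i, Finset.mem_univ i⟩
  have hzero : ∑ k, A i₀ k * (v i₀ - v k) = 0 := by
    have := hv i₀
    simp only [mulVec, dotProduct, Finset.sum_mul] at this
    simp only [mul_sub, Finset.sum_sub_distrib, this, sub_self]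
  have heq : ∀ k, v k = v i₀ := fun k => by
    have hk := (Finset.sum_eq_zero_iff_of_nonneg fun k _ =>
      mul_nonneg (hA i₀ k).le (sub_nonneg.mpr (hmax k (Finset.mem_univ k)))).mp hzero k
        (Finset.mem_univ k)
    exact (sub_eq_zero.mp ((mul_eq_zero.mp hk).resolve_left (hA i₀ k).ne')).symm
  rw [heq i, heq j]

theorem exchMatrix_mul_mul_exchMatrix {m : ℕ} (A : Matrix (Fin m) (Fin m) ℝ) :
    exchMatrix m * A * exchMatrix m = A.submatrix Fin.rev Fin.rev := by
  have hJ : exchMatrix m = (Fin.revPerm : Equiv.Perm (Fin m)).toPEquiv.toMatrix := by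
    ext i j
    have := i.isLt
    simp only [exchMatrix, of_apply, PEquiv.toMatrix_apply, Equiv.toPEquiv_apply,
      Option.mem_def, Option.some.injEq, Fin.ext_iff, Fin.revPerm_apply, Fin.val_rev]
    split_ifs <;> first | rfl | omega
  rw [hJ, PEquiv.toMatrix_toPEquiv_mul, PEquiv.mul_toMatrix_toPEquiv, Fin.revPerm_symm]
  rfl

section Pmat

variable {p m : ℕ}

theorem Pmat_apply (i j : Fin m) :
    Pmat p m i j = (1 - (p : ℝ)⁻¹) * (p : ℝ)⁻¹ ^ ((i : ℤ) - j).natAbs := by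
  rw [Pmat, of_apply, Int.abs_eq_natAbs, _root_.zpow_neg, zpow_natCast, inv_pow]

theorem Pmat_pos (hp : 1 < p) (i j : Fin m) : 0 < Pmat p m i j := by
  have hx : (p : ℝ)⁻¹ < 1 := inv_lt_one_of_one_lt₀ (by exact_mod_cast hp)
  rw [Pmat_apply]
  exact mul_pos (sub_pos.mpr hx) (pow_pos (by positivity) _)

theorem LamDiag_pos (hp : 1 < p) (i : Fin m) : 0 < LamDiag p m i :=
  Finset.sum_pos (fun j _ => Pmat_pos hp i j) ⟨i, Finset.mem_univ i⟩

theorem Pmat_mulVec_one : Pmat p m *ᵥ 1 = LamDiag p m := by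
  ext i
  simp [mulVec, dotProduct, LamDiag]

theorem Pmat_rev_rev (i j : Fin m) : Pmat p m i.rev j.rev = Pmat p m i j := by
  simp only [Pmat_apply, Fin.val_rev]
  congr 2
  omega

theorem LamDiag_rev (i : Fin m) : LamDiag p m i.rev = LamDiag p m i := by
  rw [LamDiag, LamDiag, ← Equiv.sum_comp Fin.revPerm]
  exact Finset.sum_congr rfl fun j _ => Pmat_rev_rev i j

theorem Pmat_row_three_term {i j k : Fin m} (hij : (i : ℕ) + 1 = j) (hjk : (j : ℕ) + 1 = k) :
    -(p : ℝ)⁻¹ • Pmat p m i + (1 + (p : ℝ)⁻¹ ^ 2) • Pmat p m j - (p : ℝ)⁻¹ • Pmat p m k =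
      Pi.single j ((1 - (p : ℝ)⁻¹) * (1 - (p : ℝ)⁻¹ ^ 2)) := by
  ext l
  have h := pow_natAbs_second_difference (p : ℝ)⁻¹ ((j : ℤ) - l)
  rw [show (j : ℤ) - l - 1 = (i : ℤ) - l by omega, show (j : ℤ) - l + 1 = (k : ℤ) - l by omega] at h
  simp only [Pi.add_apply, Pi.sub_apply, Pi.smul_apply, smul_eq_mul, Pmat_apply, Pi.single_apply]
  by_cases hl : l = j
  · subst hl
    simp only [sub_self, if_true] at h ⊢
    linear_combination (1 - (p : ℝ)⁻¹) * h
  · rw [if_neg (by omega)] at h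
    rw [if_neg hl]
    linear_combination (1 - (p : ℝ)⁻¹) * h

theorem Pmat_row_last {i j : Fin m} (hij : (i : ℕ) + 1 = j) (hj : (j : ℕ) + 1 = m) :
    Pmat p m j - (p : ℝ)⁻¹ • Pmat p m i = Pi.single j ((1 - (p : ℝ)⁻¹) * (1 - (p : ℝ)⁻¹ ^ 2)) := by
  ext l
  have h := pow_natAbs_first_difference (p : ℝ)⁻¹ (n := (j : ℤ) - l) (by omega)
  rw [show (j : ℤ) - l - 1 = (i : ℤ) - l by omega] at h
  simp only [Pi.sub_apply, Pi.smul_apply, smul_eq_mul, Pmat_apply, Pi.single_apply]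
  by_cases hl : l = j
  · subst hl
    simp only [sub_self, if_true] at h ⊢
    linear_combination (1 - (p : ℝ)⁻¹) * h
  · rw [if_neg (by omega)] at h
    rw [if_neg hl]
    linear_combination (1 - (p : ℝ)⁻¹) * h

theorem Pmat_mulVec_three_term {i j k : Fin m} (hij : (i : ℕ) + 1 = j) (hjk : (j : ℕ) + 1 = k)
    (g : Fin m → ℝ) :
    -(p : ℝ)⁻¹ * (Pmat p m *ᵥ g) i + (1 + (p : ℝ)⁻¹ ^ 2) * (Pmat p m *ᵥ g) j -
        (p : ℝ)⁻¹ * (Pmat p m *ᵥ g) k = (1 - (p : ℝ)⁻¹) * (1 - (p : ℝ)⁻¹ ^ 2) * g j := by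
  simpa [mulVec, sub_dotProduct, add_dotProduct, smul_dotProduct] using
    congrArg (· ⬝ᵥ g) (Pmat_row_three_term (p := p) hij hjk)

theorem Pmat_mulVec_last {i j : Fin m} (hij : (i : ℕ) + 1 = j) (hj : (j : ℕ) + 1 = m)
    (g : Fin m → ℝ) :
    (Pmat p m *ᵥ g) j - (p : ℝ)⁻¹ * (Pmat p m *ᵥ g) i =
      (1 - (p : ℝ)⁻¹) * (1 - (p : ℝ)⁻¹ ^ 2) * g j := by
  simpa [mulVec, sub_dotProduct, smul_dotProduct] using
    congrArg (· ⬝ᵥ g) (Pmat_row_last (p := p) hij hj)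

end Pmat

theorem eq_last_of_Pmat_mulVec_eq {p m : ℕ} (hp : 1 < p) {g v : Fin m → ℝ}
    (hgv : ∀ i, (Pmat p m *ᵥ g) i = LamDiag p m i * v i) {j : Fin m}
    (hgj : ∀ i, j < i → g i = v i) {k : Fin m} (hk : (k : ℕ) + 1 = m) {i : Fin m}
    (hji : j ≤ i) : v i = v k := by
  have hx : 0 < (p : ℝ)⁻¹ := inv_pos.mpr (by exact_mod_cast (zero_lt_one.trans hp))
  have cancel : ∀ i, (p : ℝ)⁻¹ * LamDiag p m i * (v i - v k) = 0 → v i = v k := fun i h =>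
    sub_eq_zero.mp ((mul_eq_zero.mp h).resolve_left (mul_pos hx (LamDiag_pos hp i)).ne')
  -- `v` and the constant vector `1` satisfy the same recurrences, read off from the rows of `P`
  have step : ∀ i i' i'' : Fin m, (i : ℕ) + 1 = i' → (i' : ℕ) + 1 = i'' → j < i' →
      v i' = v k → v i'' = v k → v i = v k := by
    intro i i' i'' h h' hj hv' hv''
    have hg := Pmat_mulVec_three_term (p := p) h h' g
    have h1 := Pmat_mulVec_three_term (p := p) h h' 1
    rw [hgv, hgv, hgv, hgj i' hj, hv', hv''] at hg
    rw [Pmat_mulVec_one, Pi.one_apply, mul_one] at h1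
    exact cancel i (by linear_combination -hg + v k * h1)
  have last : ∀ i : Fin m, (i : ℕ) + 1 = k → j < k → v i = v k := by
    intro i h hj
    have hg := Pmat_mulVec_last (p := p) h hk g
    have h1 := Pmat_mulVec_last (p := p) h hk 1
    rw [hgv, hgv, hgj k hj] at hg
    rw [Pmat_mulVec_one, Pi.one_apply, mul_one] at h1
    exact cancel i (by linear_combination -hg + v k * h1)
  suffices ∀ d : ℕ, ∀ i : Fin m, (i : ℕ) + d = k → j ≤ i → v i = v k from
    this (k - i) i (by omega) hji
  intro d
  induction d using Nat.twoStepInduction with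
  | zero => exact fun i h _ => congrArg v (Fin.ext h)
  | one => exact fun i h hji => last i h (by omega)
  | more d ih₀ ih₁ =>
    intro i h hji
    obtain ⟨i', hi'⟩ : ∃ i' : Fin m, (i' : ℕ) = i + 1 := ⟨⟨i + 1, by omega⟩, rfl⟩
    obtain ⟨i'', hi''⟩ : ∃ i'' : Fin m, (i'' : ℕ) = i + 2 := ⟨⟨i + 2, by omega⟩, rfl⟩
    exact step i i' i'' (by omega) (by omega) (by omega)
      (ih₁ i' (by omega) (by omega)) (ih₀ i'' (by omega) (by omega))

def IsRegularPartSolution (p m : ℕ) (C : Matrix (Fin m) (Fin m) ℝ) : Prop :=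
  (Pmat p m - diagonal (LamDiag p m)) * C =
    (1 / (1 - (p : ℝ)⁻¹)) •
      (Pmat p m * diagonal (fun i => (LamDiag p m i)⁻¹) - (1 / (m : ℝ)) • of (fun _ _ => (1 : ℝ)))

namespace IsRegularPartSolution

variable {p m : ℕ} {C : Matrix (Fin m) (Fin m) ℝ}

theorem submatrix_rev (h : IsRegularPartSolution p m C) :
    IsRegularPartSolution p m (C.submatrix Fin.rev Fin.rev) := by
  unfold IsRegularPartSolution at h ⊢
  have hφ : ∀ M : Matrix (Fin m) (Fin m) ℝ,
      reindexAlgEquiv ℝ ℝ Fin.revPerm M = M.submatrix Fin.rev Fin.rev := fun _ => rfl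
  have hP : (Pmat p m).submatrix Fin.rev Fin.rev = Pmat p m := by
    ext i j; exact Pmat_rev_rev i j
  have hdiag : ∀ d : Fin m → ℝ, (∀ i, d i.rev = d i) →
      (diagonal d).submatrix Fin.rev Fin.rev = diagonal d := fun d hd => by
    ext i j; simp [diagonal_apply, hd]
  have := congrArg (reindexAlgEquiv ℝ ℝ Fin.revPerm) h
  have hones : (of fun _ _ => (1 : ℝ)).submatrix Fin.rev Fin.rev = of fun (_ _ : Fin m) => 1 := rfl
  simp only [map_mul, map_sub, map_smul] at this
  simpa only [hφ, hP, hones, hdiag _ LamDiag_rev,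
    hdiag (fun i => (LamDiag p m i)⁻¹) fun i => by rw [LamDiag_rev]] using this

theorem submatrix_rev_eq (hp : 1 < p) (hC : C.IsSymm) (h : IsRegularPartSolution p m C) :
    C.submatrix Fin.rev Fin.rev = C := by
  set D := C - C.submatrix Fin.rev Fin.rev with hD_def
  have hD : (Pmat p m - diagonal (LamDiag p m)) * D = 0 := by
    rw [hD_def, mul_sub, h, h.submatrix_rev, sub_self]
  have hcol : ∀ i i' j, D i j = D i' j := fun i i' j =>
    eq_of_mulVec_eq_rowSum_mul (Pmat_pos hp) (v := fun k => D k j) (fun l => by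
      have := congrFun (congrFun hD l) j
      rw [sub_mul, Matrix.sub_apply, diagonal_mul, Matrix.zero_apply, sub_eq_zero] at this
      exact this) i i'
  have hsymm : ∀ i j, D i j = D j i := fun i j => by
    simp [hD_def, hC.apply]
  have hrev : ∀ i j, D i.rev j.rev = -D i j := fun i j => by
    simp [hD_def]
  ext i j
  have : D i j = D i.rev j.rev :=
    calc D i j = D j.rev j := hcol _ _ _
      _ = D j j.rev := hsymm _ _
      _ = D i.rev j.rev := hcol _ _ _
  rw [hrev] at this
  exact (sub_eq_zero.mp (by linarith : D i j = 0)).symm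

theorem Pmat_mul_sub_diagonal (h : IsRegularPartSolution p m C) :
    Pmat p m * (C - (1 - (p : ℝ)⁻¹)⁻¹ • diagonal (fun i => (LamDiag p m i)⁻¹)) =
      diagonal (LamDiag p m) * C - ((1 - (p : ℝ)⁻¹)⁻¹ * (m : ℝ)⁻¹) • of (fun _ _ => 1) := by
  rw [IsRegularPartSolution, sub_mul, sub_eq_iff_eq_add] at h
  rw [mul_sub, Matrix.mul_smul, h]
  module

theorem col_sub_eq (hp : 1 < p) (h : IsRegularPartSolution p m C) {i j j' k : Fin m}
    (hj' : j' ≤ j) (hji : j ≤ i) (hk : (k : ℕ) + 1 = m) :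
    C i j - C i j' = C k j - C k j' := by
  set D := C - (1 - (p : ℝ)⁻¹)⁻¹ • diagonal (fun i => (LamDiag p m i)⁻¹)
  refine eq_last_of_Pmat_mulVec_eq hp (g := fun l => D l j - D l j')
    (v := fun l => C l j - C l j') (fun l => ?_)
    (fun l hl => ?_) hk hji
  · have hcol := congrArg₂ (· - ·) (congrFun (congrFun h.Pmat_mul_sub_diagonal l) j)
      (congrFun (congrFun h.Pmat_mul_sub_diagonal l) j')
    simp only [Matrix.sub_apply, diagonal_mul, Matrix.smul_apply, of_apply,
      sub_sub_sub_cancel_right, ← mul_sub] at hcol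
    rw [← hcol, mul_apply, mul_apply, ← Finset.sum_sub_distrib]
    simp only [mulVec, dotProduct, mul_sub, D]
  · simp [D, hl.ne', (hj'.trans_lt hl).ne']

end IsRegularPartSolution

/-- A symmetric solution `C` of the matrix equation for the regular
part of the Green's function is bisymmetric and determined by its first column: if `C`
is symmetric and `(P − Λ) C = (1/(1 − p⁻¹))(P Λ⁻¹ − (1/m) 𝟙𝟙ᵀ)`, then `J C J = C`,
and `C_{ij} = C_{i1} + C_{mj} − C_{m1}` for `i ≥ j`, `C_{ij} = C_{im} + C_{1j} − C_{1m}`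
for `i ≤ j` (here stated with 0-based indices: column `1` is index `0`, column `m` is
index `m−1`). -/
theorem regular_part_bisymmetric (p : ℕ) (hp : p.Prime) (m : ℕ) (hm : 1 ≤ m)
    (C : Matrix (Fin m) (Fin m) ℝ) (hC : C.IsSymm)
    (hCeq : (Pmat p m - Matrix.diagonal (LamDiag p m)) * C =
      (1 / (1 - (p : ℝ)⁻¹)) •
        (Pmat p m * Matrix.diagonal (fun i => (LamDiag p m i)⁻¹) -
          (1 / (m : ℝ)) • Matrix.of (fun _ _ => (1 : ℝ)))) :
    exchMatrix m * C * exchMatrix m = C ∧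
    (∀ i j : Fin m, (j : ℕ) ≤ (i : ℕ) →
      C i j = C i ⟨0, by omega⟩ + C ⟨m - 1, by omega⟩ j -
        C ⟨m - 1, by omega⟩ ⟨0, by omega⟩) ∧
    (∀ i j : Fin m, (i : ℕ) ≤ (j : ℕ) →
      C i j = C i ⟨m - 1, by omega⟩ + C ⟨0, by omega⟩ j -
        C ⟨0, by omega⟩ ⟨m - 1, by omega⟩) := by
  have hsol : IsRegularPartSolution p m C := hCeq
  have lower : ∀ i j : Fin m, j ≤ i → C i j - C i ⟨0, by omega⟩ =
      C ⟨m - 1, by omega⟩ j - C ⟨m - 1, by omega⟩ ⟨0, by omega⟩ := fun i j hji =>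
    hsol.col_sub_eq hp.one_lt (Nat.zero_le _) hji (Nat.sub_add_cancel hm)
  refine ⟨?_, fun i j hji => ?_, fun i j hij => ?_⟩
  · rw [exchMatrix_mul_mul_exchMatrix]
    exact hsol.submatrix_rev_eq hp.one_lt hC
  · linarith [lower i j hji]
  · linarith [lower j i hij, hC.apply i j, hC.apply ⟨0, by omega⟩ j, hC.apply i ⟨m - 1, by omega⟩,
      hC.apply (⟨0, by omega⟩ : Fin m) ⟨m - 1, by omega⟩]
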